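/- Let A, B be unital C*-algebras, H a complex Hilbert space, and σ : B → B(H) a *-homomorphism. Then for all completely positive maps T1, T2 : A → B, β(σ∘T1, σ∘T2) ≤ β(T1, T2). -/

import Mathlib

noncomputable section

/-- A map between star algebras is *completely positive* if, for every `n`, its
entrywise application to `n × n` matrices maps positive elements (i.e. elements of the form
`star y * y`) to positive elements. -/
def IsCPMap {A B : Type*} [NonUnitalSemiring A] [StarRing A]
    [NonUnitalSemiring B] [StarRing B] (T : A → B) : Prop :=
  ∀ (n : ℕ) (x : Matrix (Fin n) (Fin n) A),
    (∃ y : Matrix (Fin n) (Fin n) A, x = star y * y) →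
      ∃ z : Matrix (Fin n) (Fin n) B, x.map T = star z * z

/-- `That : A → M₂(B)` is a cp extension of the pair `(T₁, T₂)`: it is completely positive
and its diagonal entries are `T₁` and `T₂`. -/
def IsCPExtension {A B : Type*} [CStarAlgebra A] [CStarAlgebra B]
    (T₁ T₂ : A → B) (That : A →ₗ[ℂ] Matrix (Fin 2) (Fin 2) B) : Prop :=
  IsCPMap That ∧ (∀ a : A, That a 0 0 = T₁ a) ∧ (∀ a : A, That a 1 1 = T₂ a)

/-- The Bures distance between two completely positive maps `T₁ T₂ : A → B`:
`β(T₁,T₂) = √ inf { ‖T₁ 1 + T₂ 1 - T̂₁₂ 1 - T̂₂₁ 1‖ | T̂ a cp extension of (T₁, T₂) }`. -/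
noncomputable def buresDist {A B : Type*} [CStarAlgebra A] [CStarAlgebra B]
    (T₁ T₂ : A → B) : ℝ :=
  Real.sqrt (sInf { r : ℝ | ∃ That : A →ₗ[ℂ] Matrix (Fin 2) (Fin 2) B,
    IsCPExtension T₁ T₂ That ∧ r = ‖T₁ 1 + T₂ 1 - That 1 0 1 - That 1 1 0‖ })


/-!
Applying the *-homomorphism `σ` entrywise to a cp extension `T̂` of `(T₁, T₂)` gives a cp
extension of `(σ ∘ T₁, σ ∘ T₂)` whose defect `σ (T₁ 1 + T₂ 1 - T̂₁₂ 1 - T̂₂₁ 1)` has norm at most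
that of `T̂`, because *-homomorphisms between C*-algebras are contractive. So every value in the
infimum defining `β(T₁, T₂)` dominates one in the infimum defining `β(σ ∘ T₁, σ ∘ T₂)`. The
block-diagonal extension makes the first infimum nonempty, which matters since `sInf ∅ = 0` in `ℝ`.
-/

theorem IsCPMap.starHom_comp {A B C F : Type*} [NonUnitalSemiring A] [StarRing A]
    [NonUnitalSemiring B] [StarRing B] [NonUnitalSemiring C] [StarRing C]
    [FunLike F B C] [NonUnitalRingHomClass F B C] [StarHomClass F B C]
    {T : A → B} (hT : IsCPMap T) (φ : F) : IsCPMap (φ ∘ T) := by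
  intro n x hx
  obtain ⟨z, hz⟩ := hT n x hx
  refine ⟨z.map φ, ?_⟩
  rw [← Matrix.map_map, hz, Matrix.map_mul, Matrix.star_eq_conjTranspose,
    Matrix.star_eq_conjTranspose, Matrix.conjTranspose_map φ (map_star φ)]

theorem IsCPMap.diagonal {A B ι : Type*} [NonUnitalSemiring A] [StarRing A]
    [NonUnitalSemiring B] [StarRing B] [Fintype ι] [DecidableEq ι]
    {T : ι → A → B} (hT : ∀ i, IsCPMap (T i)) :
    IsCPMap fun a => Matrix.diagonal fun i => T i a := by
  intro n x hx
  choose z hz using fun i => hT i n x hx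
  refine ⟨Matrix.of fun p q => Matrix.diagonal fun i => z i p q, ?_⟩
  ext p q i j
  have hentry := fun i => congrFun₂ (hz i) p q
  simp only [Matrix.map_apply] at hentry
  rcases eq_or_ne i j with rfl | hij
  · simp [hentry, Matrix.mul_apply, Matrix.sum_apply, Matrix.diagonal_apply]
  · simp [Matrix.mul_apply, Matrix.sum_apply, Matrix.diagonal_apply, hij, hij.symm]

namespace NonUnitalStarAlgHom

variable {R B C : Type*} [Monoid R] [NonUnitalNonAssocSemiring B] [DistribMulAction R B]
  [StarAddMonoid B] [NonUnitalNonAssocSemiring C] [DistribMulAction R C] [StarAddMonoid C]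

def mapMatrix {m : Type*} [Fintype m] (σ : B →⋆ₙₐ[R] C) :
    Matrix m m B →⋆ₙₐ[R] Matrix m m C where
  toFun M := M.map σ
  map_smul' r M := by ext; simp
  map_zero' := Matrix.map_zero _ (map_zero σ)
  map_add' M N := Matrix.map_add _ (map_add σ) M N
  map_mul' _ _ := Matrix.map_mul
  map_star' _ := Matrix.conjTranspose_map σ (map_star σ)

end NonUnitalStarAlgHom

theorem exists_isCPExtension {A B : Type*} [CStarAlgebra A] [CStarAlgebra B]
    {T₁ T₂ : A →ₗ[ℂ] B} (h₁ : IsCPMap T₁) (h₂ : IsCPMap T₂) :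
    ∃ That, IsCPExtension T₁ T₂ That :=
  ⟨Matrix.diagonalLinearMap (Fin 2) ℂ B ∘ₗ LinearMap.pi ![T₁, T₂],
    IsCPMap.diagonal (Fin.forall_fin_two.2 ⟨h₁, h₂⟩), fun _ => rfl, fun _ => rfl⟩

theorem IsCPExtension.map {A B C : Type*} [CStarAlgebra A] [CStarAlgebra B] [CStarAlgebra C]
    {T₁ T₂ : A → B} {That : A →ₗ[ℂ] Matrix (Fin 2) (Fin 2) B}
    (h : IsCPExtension T₁ T₂ That) (σ : B →⋆ₙₐ[ℂ] C) :
    IsCPExtension (σ ∘ T₁) (σ ∘ T₂)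
      ((σ.mapMatrix (m := Fin 2) : _ →ₗ[ℂ] Matrix (Fin 2) (Fin 2) C) ∘ₗ That) :=
  ⟨h.1.starHom_comp σ.mapMatrix, fun a => congrArg σ (h.2.1 a), fun a => congrArg σ (h.2.2 a)⟩

theorem buresDist_comp_le {A B C : Type*} [CStarAlgebra A] [CStarAlgebra B] [CStarAlgebra C]
    (σ : B →⋆ₙₐ[ℂ] C) {T₁ T₂ : A →ₗ[ℂ] B} (h₁ : IsCPMap T₁) (h₂ : IsCPMap T₂) :
    buresDist (σ ∘ T₁) (σ ∘ T₂) ≤ buresDist T₁ T₂ := by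
  refine Real.sqrt_le_sqrt (le_csInf ?_ ?_)
  · obtain ⟨That, hThat⟩ := exists_isCPExtension h₁ h₂
    exact ⟨_, That, hThat, rfl⟩
  · rintro _ ⟨That, hThat, rfl⟩
    refine le_trans (csInf_le ?_ ⟨_, hThat.map σ, ?_⟩)
      (NonUnitalStarAlgHom.norm_apply_le σ (T₁ 1 + T₂ 1 - That 1 0 1 - That 1 1 0))
    · exact ⟨0, by rintro _ ⟨_, -, rfl⟩; exact norm_nonneg _⟩
    · simp only [map_add, map_sub]
      rfl

theorem stmt10 {A B : Type*} [CStarAlgebra A] [CStarAlgebra B]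
    {H : Type*} [NormedAddCommGroup H] [InnerProductSpace ℂ H] [CompleteSpace H]
    (σ : B →⋆ₙₐ[ℂ] (H →L[ℂ] H))
    (T₁ T₂ : A →ₗ[ℂ] B) (hT₁ : IsCPMap T₁) (hT₂ : IsCPMap T₂) :
    buresDist (fun a => σ (T₁ a)) (fun a => σ (T₂ a)) ≤ buresDist (⇑T₁) (⇑T₂) :=
  buresDist_comp_le σ hT₁ hT₂
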